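/- Let ν be a Young measure on ℝ parametrized by (0,T)×Ω with finite 2-moments, and let a ∈ L²((0,T)×Ω) be such that ∫_ℝ z dν_{(t,x)}(z) = a(t,x) for a.e. (t,x) ∈ (0,T)×Ω, and such that ∫₀^T ∫_Ω ( ∫_ℝ z² dν_{(t,x)}(z) ) dx dt = ∫₀^T ∫_Ω a(t,x)² dx dt. Then for a.e. (t,x) ∈ (0,T)×Ω, ν_{(t,x)} = δ_{a(t,x)}, the Dirac measure at a(t,x). -/

import Mathlib

/-!
Since `a q` is the mean of `ν q`, the variance of `ν q` is `∫ z² dν q - (a q)² ≥ 0`. The hypothesis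
says that this nonnegative function of `q` has integral zero, so it vanishes almost everywhere, and a
probability measure with zero variance is the Dirac mass at its mean.
-/

open MeasureTheory ProbabilityTheory Set

lemma MeasureTheory.Measure.eq_dirac_of_ae_eq {α : Type*} [MeasurableSpace α] {μ : Measure α}
    [IsProbabilityMeasure μ] {c : α} (h : ∀ᵐ x ∂μ, x = c) : μ = dirac c :=
  calc μ = μ.map id := map_id.symm
    _ = μ.map fun _ ↦ c := map_congr h
    _ = dirac c := by rw [map_const, measure_univ, one_smul]

section RealMoments

variable {μ : Measure ℝ}

lemma sq_integral_le_integral_sq [IsProbabilityMeasure μ] (hμ : MemLp id 2 μ) :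
    (∫ z, z ∂μ) ^ 2 ≤ ∫ z, z ^ 2 ∂μ := by
  have := variance_nonneg id μ
  rw [variance_eq_sub hμ] at this
  simpa using this

lemma eq_dirac_integral_of_integral_sq_eq [IsProbabilityMeasure μ] (hμ : MemLp id 2 μ)
    (h : ∫ z, z ^ 2 ∂μ = (∫ z, z ∂μ) ^ 2) : μ = Measure.dirac (∫ z, z ∂μ) := by
  refine Measure.eq_dirac_of_ae_eq (ae_eq_integral_of_variance_eq_zero hμ ?_)
  change Var[id; μ] = 0
  rw [variance_eq_sub hμ]
  simpa [sub_eq_zero] using h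

lemma integral_sq_eq_toReal_lintegral (μ : Measure ℝ) :
    ∫ z, z ^ 2 ∂μ = (∫⁻ z, ENNReal.ofReal (‖z‖ ^ 2) ∂μ).toReal := by
  simp only [Real.norm_eq_abs, sq_abs]
  exact integral_eq_lintegral_of_nonneg_ae (.of_forall fun z ↦ sq_nonneg z) (by fun_prop)

lemma memLp_two_id_of_lintegral_lt_top (h : ∫⁻ z, ENNReal.ofReal (‖z‖ ^ 2) ∂μ < ⊤) :
    MemLp id 2 μ := by
  refine (memLp_two_iff_integrable_sq aestronglyMeasurable_id).2 ⟨by fun_prop, ?_⟩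
  change HasFiniteIntegral (fun z : ℝ ↦ z ^ 2) μ
  rw [hasFiniteIntegral_iff_ofReal (.of_forall fun z ↦ sq_nonneg z)]
  simpa [Real.norm_eq_abs, sq_abs] using h

end RealMoments

section YoungMeasure

variable {β : Type*} [MeasurableSpace β] {μ : Measure β} {ν : β → Measure ℝ}

lemma measurable_lintegral_ofReal_norm_sq (hν : Measurable ν) :
    Measurable fun q ↦ ∫⁻ z, ENNReal.ofReal (‖z‖ ^ 2) ∂(ν q) :=
  (Measure.measurable_lintegral (by fun_prop)).comp hν

lemma ae_memLp_two_id_of_lintegral_lt_top (hν : Measurable ν)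
    (h : ∫⁻ q, ∫⁻ z, ENNReal.ofReal (‖z‖ ^ 2) ∂(ν q) ∂μ < ⊤) :
    ∀ᵐ q ∂μ, MemLp id 2 (ν q) := by
  filter_upwards [ae_lt_top (measurable_lintegral_ofReal_norm_sq hν) h.ne] with q hq
  exact memLp_two_id_of_lintegral_lt_top hq

lemma integrable_integral_sq_of_lintegral_lt_top (hν : Measurable ν)
    (h : ∫⁻ q, ∫⁻ z, ENNReal.ofReal (‖z‖ ^ 2) ∂(ν q) ∂μ < ⊤) :
    Integrable (fun q ↦ ∫ z, z ^ 2 ∂(ν q)) μ := by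
  simp only [integral_sq_eq_toReal_lintegral]
  exact integrable_toReal_of_lintegral_ne_top
    (measurable_lintegral_ofReal_norm_sq hν).aemeasurable h.ne

end YoungMeasure

theorem dirac_from_first_and_second_moment_equality_general
    {n : ℕ} (T : ℝ)
    (Ω : Set (Fin n → ℝ))
    (ν : ℝ × (Fin n → ℝ) → Measure ℝ)
    (hprob : ∀ q, IsProbabilityMeasure (ν q))
    (hkernel : ∀ A : Set ℝ, MeasurableSet A → Measurable fun q => ν q A)
    (hmom : ∫⁻ q in Ioo (0 : ℝ) T ×ˢ Ω, ∫⁻ z, ENNReal.ofReal (‖z‖ ^ 2) ∂(ν q) < ⊤)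
    (a : ℝ × (Fin n → ℝ) → ℝ)
    (ha : MemLp a 2 (volume.restrict (Ioo (0 : ℝ) T ×ˢ Ω)))
    (hmean : ∀ᵐ q ∂(volume.restrict (Ioo (0 : ℝ) T ×ˢ Ω)), ∫ z, z ∂(ν q) = a q)
    (heq : ∫ q in Ioo (0 : ℝ) T ×ˢ Ω, (∫ z, z ^ 2 ∂(ν q))
      = ∫ q in Ioo (0 : ℝ) T ×ˢ Ω, (a q) ^ 2) :
    ∀ᵐ q ∂(volume.restrict (Ioo (0 : ℝ) T ×ˢ Ω)),
      ν q = Measure.dirac (a q) := by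
  have hν : Measurable ν := Measure.measurable_of_measurable_coe ν hkernel
  have hL2 := ae_memLp_two_id_of_lintegral_lt_top hν hmom
  have hsq : (fun q ↦ a q ^ 2) =ᵐ[volume.restrict (Ioo (0 : ℝ) T ×ˢ Ω)]
      fun q ↦ ∫ z, z ^ 2 ∂(ν q) := by
    refine (integral_eq_iff_of_ae_le ha.integrable_sq
      (integrable_integral_sq_of_lintegral_lt_top hν hmom) ?_).1 heq.symm
    filter_upwards [hL2, hmean] with q hq hm
    exact hm ▸ sq_integral_le_integral_sq hq
  filter_upwards [hL2, hmean, hsq] with q hq hm hs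
  rw [← hm]
  exact eq_dirac_integral_of_integral_sq_eq hq (by rw [hm, hs])

/-- Let `ν` be a Young measure on `ℝ` parametrized by `(0,T) × Ω` with
finite 2-moments, and `a ∈ L²((0,T) × Ω)` with `∫ z dν_{(t,x)} = a(t,x)` a.e. and
`∫∫ (∫ z² dν_{(t,x)}) dx dt = ∫∫ a(t,x)² dx dt`.  Then for a.e. `(t,x)`,
`ν_{(t,x)} = δ_{a(t,x)}`. -/
theorem dirac_from_first_and_second_moment_equality
    {n : ℕ} (T : ℝ) (hT : 0 < T)
    (Ω : Set (Fin n → ℝ)) (hΩopen : IsOpen Ω) (hΩbdd : Bornology.IsBounded Ω)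
    (ν : ℝ × (Fin n → ℝ) → Measure ℝ)
    (hprob : ∀ q, IsProbabilityMeasure (ν q))
    (hkernel : ∀ A : Set ℝ, MeasurableSet A → Measurable fun q => ν q A)
    (hmom : ∫⁻ q in Ioo (0 : ℝ) T ×ˢ Ω, ∫⁻ z, ENNReal.ofReal (‖z‖ ^ 2) ∂(ν q) < ⊤)
    (a : ℝ × (Fin n → ℝ) → ℝ)
    (ha : MemLp a 2 (volume.restrict (Ioo (0 : ℝ) T ×ˢ Ω)))
    (hmean : ∀ᵐ q ∂(volume.restrict (Ioo (0 : ℝ) T ×ˢ Ω)), ∫ z, z ∂(ν q) = a q)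
    (heq : ∫ q in Ioo (0 : ℝ) T ×ˢ Ω, (∫ z, z ^ 2 ∂(ν q))
      = ∫ q in Ioo (0 : ℝ) T ×ˢ Ω, (a q) ^ 2) :
    ∀ᵐ q ∂(volume.restrict (Ioo (0 : ℝ) T ×ˢ Ω)),
      ν q = Measure.dirac (a q) :=
  dirac_from_first_and_second_moment_equality_general T Ω ν hprob hkernel hmom a ha hmean heq
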